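/- arXiv:2310.14351 — 3 statements merged into one kernel-verified Lean document; each statement's English description precedes it below -/
import Mathlib

section
/- For every integer $s\ge 2$ and real $x \ge 0$, the upper incomplete gamma function satisfies $\Gamma(s,x) = \int_x^\infty y^{s-1}e^{-y}\,dy \le \frac{(x+b_s)^s - x^s}{s\, b_s} e^{-x}$, where $b_s = \Gamma(s+1)^{1/(s-1)}$. -/
/-!
For integer `s = n + 1` the incomplete gamma function has the closed form
`Γ(n + 1, x) = n! e^{-x} ∑_{k ≤ n} x^k / k!`. Expanding `(x + b)^s - x^s` binomially, the bound
follows by comparing coefficients of `x^k`, which asks for `(s - k)! ≤ b^{s-k-1}`, i.e.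
`m! ≤ b^{m-1}` for `1 ≤ m ≤ s`. This holds for `b = b_s`, where it is an equality at `m = s`,
because `m!^{1/(m-1)}` increases with `m`: `(m + 1)!^n ≤ (n + 1)!^m` for `m ≤ n`.
-/

open MeasureTheory Finset Filter Topology Nat

theorem Nat.factorial_pow_le_factorial_pow {m n : ℕ} (h : m ≤ n) :
    (m + 1)! ^ n ≤ (n + 1)! ^ m := by
  obtain ⟨k, rfl⟩ := exists_add_of_le h
  have hfac : (m + 1)! ≤ (m + 2) ^ m := by
    have h := factorial_mul_descFactorial (show m ≤ m + 1 by omega)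
    rw [Nat.add_sub_cancel_left, factorial_one, one_mul] at h
    rw [← h]
    exact (descFactorial_le_pow _ _).trans (Nat.pow_le_pow_left (by omega) _)
  calc (m + 1)! ^ (m + k) = (m + 1)! ^ m * (m + 1)! ^ k := pow_add _ _ _
    _ ≤ (m + 1)! ^ m * ((m + 2) ^ m) ^ k := by gcongr
    _ = ((m + 1)! * (m + 2) ^ k) ^ m := by ring
    _ ≤ (m + k + 1)! ^ m := by
      gcongr
      simpa [Nat.add_right_comm] using factorial_mul_pow_le_factorial (m := m + 1) (n := k)

theorem Real.factorial_le_pow_of_pow_eq_factorial {n a : ℕ} {b : ℝ} (hn : n ≠ 0) (hb : 0 ≤ b)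
    (hbn : b ^ n = (n + 1)!) (ha : a ≤ n) : ((a + 1)! : ℝ) ≤ b ^ a := by
  rw [← pow_le_pow_iff_left₀ (by positivity) (by positivity) hn, ← pow_mul, mul_comm, pow_mul,
    hbn]
  exact_mod_cast Nat.factorial_pow_le_factorial_pow ha

theorem Real.hasDerivAt_sum_range_pow_div_factorial (n : ℕ) (y : ℝ) :
    HasDerivAt (fun y : ℝ => ∑ k ∈ range (n + 1), y ^ k / k !) (∑ k ∈ range n, y ^ k / k !) y := by
  induction n with
  | zero => simpa using hasDerivAt_const y (1 : ℝ)
  | succ n ih =>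
    simp only [sum_range_succ _ (n + 1)]
    refine (ih.fun_add ((hasDerivAt_pow (n + 1) y).div_const ((n + 1)! : ℝ))).congr_deriv ?_
    push_cast [Nat.add_sub_cancel, factorial_succ]
    rw [sum_range_succ]
    field_simp

theorem integral_Ici_pow_mul_exp_neg (n : ℕ) {x : ℝ} (hx : 0 ≤ x) :
    ∫ y in Set.Ici x, y ^ n * Real.exp (-y)
      = n ! * (∑ k ∈ range (n + 1), x ^ k / k !) * Real.exp (-x) := by
  set e : ℝ → ℝ := fun y => ∑ k ∈ range (n + 1), y ^ k / (k ! : ℝ)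
  have hderiv (y : ℝ) :
      HasDerivAt (fun y => -(n ! * e y * Real.exp (-y))) (y ^ n * Real.exp (-y)) y := by
    have hexp : HasDerivAt (fun y => Real.exp (-y)) (-Real.exp (-y)) y := by
      simpa using (hasDerivAt_neg y).exp
    refine ((((Real.hasDerivAt_sum_range_pow_div_factorial n y).const_mul (n ! : ℝ)).fun_mul
      hexp).fun_neg).congr_deriv ?_
    simp only [sum_range_succ _ n]
    field_simp
    ring
  have hlim : Tendsto (fun y => -(n ! * e y * Real.exp (-y))) atTop (𝓝 0) := by
    have h := tendsto_finsetSum (range (n + 1)) fun k _ =>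
      ((Real.tendsto_pow_mul_exp_neg_atTop_nhds_zero k).div_const (k ! : ℝ)).const_mul (n ! : ℝ)
    simp only [zero_div, mul_zero, sum_const_zero] at h
    convert h.neg using 2 with y
    · simp only [e, neg_inj, mul_sum, sum_mul]
      exact sum_congr rfl fun k _ => by ring
    · simp
  rw [integral_Ici_eq_integral_Ioi, integral_Ioi_of_hasDerivAt_of_nonneg' (fun y _ => hderiv y)
    (fun y hy => by have : 0 ≤ y := hx.trans hy.le; positivity) hlim]
  ring

theorem Real.factorial_mul_sum_le_add_pow_sub_pow {n : ℕ} {b x : ℝ} (hb : 0 ≤ b) (hx : 0 ≤ x)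
    (hfac : ∀ a ≤ n, ((a + 1)! : ℝ) ≤ b ^ a) :
    (n + 1)! * b * ∑ k ∈ range (n + 1), x ^ k / k ! ≤ (x + b) ^ (n + 1) - x ^ (n + 1) := by
  rw [add_pow, sum_range_succ _ (n + 1), Nat.sub_self, choose_self, mul_sum]
  simp only [pow_zero, cast_one, mul_one, add_sub_cancel_right]
  refine sum_le_sum fun k hk => ?_
  have hk : k ≤ n := Nat.lt_succ_iff.mp (mem_range.mp hk)
  have hchoose : ((n + 1)! : ℝ) = (n + 1).choose k * k ! * (n - k + 1)! := by
    rw [← Nat.sub_add_comm hk]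
    exact_mod_cast (choose_mul_factorial_mul_factorial (by omega)).symm
  have hcoeff : ((n - k + 1)! : ℝ) * b ≤ b ^ (n + 1 - k) := by
    rw [Nat.sub_add_comm hk, pow_succ]
    exact mul_le_mul_of_nonneg_right (hfac _ (Nat.sub_le n k)) hb
  calc (n + 1)! * b * (x ^ k / k !)
      = (n + 1).choose k * x ^ k * ((n - k + 1)! * b) := by
        rw [hchoose]; field_simp
    _ ≤ (n + 1).choose k * x ^ k * b ^ (n + 1 - k) := by gcongr
    _ = x ^ k * b ^ (n + 1 - k) * (n + 1).choose k := by ring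

/-- Pinelis' bound on the upper incomplete gamma function at integer `s ≥ 2`:
`∫_x^∞ y^{s-1} e^{-y} dy ≤ ((x+b_s)^s - x^s)/(s b_s) e^{-x}` with
`b_s = Γ(s+1)^{1/(s-1)}`. -/
theorem stmt2 (s : ℕ) (hs : 2 ≤ s) (x : ℝ) (hx : 0 ≤ x) :
    ∫ y in Set.Ici x, y ^ (s - 1) * Real.exp (-y)
      ≤ ((x + Real.Gamma (s + 1) ^ ((1 : ℝ) / ((s : ℝ) - 1))) ^ s - x ^ s)
          / ((s : ℝ) * Real.Gamma (s + 1) ^ ((1 : ℝ) / ((s : ℝ) - 1))) * Real.exp (-x) := by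
  obtain ⟨n, rfl⟩ : ∃ n, s = n + 1 := ⟨s - 1, by omega⟩
  have hn : n ≠ 0 := by omega
  have hexponent : (1 : ℝ) / (((n + 1 : ℕ) : ℝ) - 1) = (n : ℝ)⁻¹ := by push_cast; ring
  rw [Real.Gamma_nat_eq_factorial, hexponent, Nat.add_sub_cancel, integral_Ici_pow_mul_exp_neg n hx]
  set b : ℝ := ((n + 1)! : ℝ) ^ (n : ℝ)⁻¹
  have hb : 0 < b := by positivity
  have hbn : b ^ n = (n + 1)! := Real.rpow_inv_natCast_pow (by positivity) hn
  gcongr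
  rw [le_div_iff₀ (by positivity)]
  refine (le_of_eq ?_).trans (Real.factorial_mul_sum_le_add_pow_sub_pow hb.le hx
    fun a ha => Real.factorial_le_pow_of_pow_eq_factorial hn hb.le hbn ha)
  push_cast [factorial_succ]
  ring
end

section
/- Let $s \ge 1$ and let $A_1,\dots,A_s < 1$ be pairwise distinct reals. Define $\phi(a) = \prod_{j=1}^s (a - A_j)$ and, for $\epsilon \in (0,1]$, let $K_\epsilon = \{\mathbf{t} \in [0,1]^s : \prod_{j=1}^s t_j \ge \epsilon\}$. Then $\int_{K_\epsilon} \prod_{j=1}^s t_j^{-A_j}\, d\mathbf{t} = \frac{1}{\phi(1)} + \sum_{j=1}^s \frac{\epsilon^{1-A_j}}{(A_j-1)\,\phi'(A_j)}$. -/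
/-! Write `I(B)` for the integral of `∏ t_j^{-B_j}` over `K_ε`. Integrating out the first
coordinate, `∫_{ε/P}^1 x^{-A₀} dx = (1 - (ε/P)^c)/c` with `c = 1 - A₀` and `P` the product of the
other coordinates, so `I(A) = c⁻¹ (I(A') - ε^c I(A' + c))` where `A'` drops `A₀`. The right-hand
side of the theorem is the divided difference of `a ↦ ε^{1-a}` at the nodes `1, A₁, …, A_s`.
Shifting the nodes `A' + c` back by `c` turns the recursion for `I` into the recurrence
`(a - b) f[S] = f[S \ {b}] - f[S \ {a}]` of divided differences, with `a = 1` and `b = A₀`. -/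

open MeasureTheory Finset

section DividedDifference

variable {𝕜 : Type*} [Field 𝕜] [DecidableEq 𝕜]

/-- The divided difference `f[a₀, …, aₘ]` at the nodes `S = {a₀, …, aₘ}`. -/
def divDiff (f : 𝕜 → 𝕜) (S : Finset 𝕜) : 𝕜 :=
  ∑ a ∈ S, f a / ∏ b ∈ S.erase a, (a - b)

theorem divDiff_erase (f : 𝕜 → 𝕜) {S : Finset 𝕜} {b : 𝕜} (hb : b ∈ S) :
    divDiff f (S.erase b) = ∑ a ∈ S, f a * (a - b) / ∏ c ∈ S.erase a, (a - c) := by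
  rw [divDiff, ← sum_erase S (a := b) (by simp)]
  refine sum_congr rfl fun a ha => ?_
  have hab : a - b ≠ 0 := sub_ne_zero.mpr (ne_of_mem_erase ha)
  have hbS : b ∈ S.erase a := mem_erase.mpr ⟨(ne_of_mem_erase ha).symm, hb⟩
  rw [← mul_prod_erase (S.erase a) (fun c => a - c) hbS, erase_right_comm, mul_comm (a - b),
    mul_div_mul_right _ _ hab]

theorem divDiff_erase_sub_divDiff_erase (f : 𝕜 → 𝕜) {S : Finset 𝕜} {a b : 𝕜}
    (ha : a ∈ S) (hb : b ∈ S) :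
    divDiff f (S.erase b) - divDiff f (S.erase a) = (a - b) * divDiff f S := by
  rw [divDiff_erase f ha, divDiff_erase f hb, ← sum_sub_distrib, divDiff, mul_sum]
  refine sum_congr rfl fun c _ => ?_
  ring

theorem divDiff_const_mul (k : 𝕜) (f : 𝕜 → 𝕜) (S : Finset 𝕜) :
    divDiff (fun x => k * f x) S = k * divDiff f S := by
  simp only [divDiff, mul_sum, mul_div_assoc]

theorem divDiff_map_addRight (f : 𝕜 → 𝕜) (S : Finset 𝕜) (c : 𝕜) :
    divDiff f (S.map (Equiv.addRight c).toEmbedding) = divDiff (fun x => f (x + c)) S := by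
  simp only [divDiff, sum_map]
  refine sum_congr rfl fun a _ => ?_
  rw [← map_erase, prod_map]
  simp

theorem divDiff_singleton (f : 𝕜 → 𝕜) (a : 𝕜) : divDiff f {a} = f a := by
  simp [divDiff]

theorem divDiff_insert_image {ι : Type*} [Fintype ι] [DecidableEq ι] (f : 𝕜 → 𝕜) {x : 𝕜}
    {v : ι → 𝕜} (hv : Function.Injective v) (hx : ∀ i, v i ≠ x) :
    divDiff f (insert x (univ.image v)) =
      f x / ∏ i, (x - v i) + ∑ i, f (v i) / ((v i - x) * ∏ k ∈ univ.erase i, (v i - v k)) := by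
  have hxS : x ∉ univ.image v := by simpa using hx
  rw [divDiff, sum_insert hxS, erase_insert hxS, prod_image hv.injOn, sum_image hv.injOn]
  congr 1
  refine sum_congr rfl fun i _ => ?_
  rw [erase_insert_of_ne (hx i).symm, prod_insert fun h => hxS (mem_of_mem_erase h),
    ← image_erase hv, prod_image hv.injOn]

end DividedDifference

theorem integral_eq_integral_integral_cons {α E : Type*} [MeasureSpace α]
    [SigmaFinite (volume : Measure α)] [NormedAddCommGroup E] [NormedSpace ℝ E] {n : ℕ}
    {g : (Fin (n + 1) → α) → E} (hg : Integrable g) :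
    ∫ t, g t = ∫ y : Fin n → α, ∫ x : α, g (Fin.cons x y) := by
  have hmp := (volume_preserving_piFinSuccAbove (fun _ : Fin (n + 1) => α) 0).symm
  rw [← hmp.integral_comp' g, Measure.volume_eq_prod]
  refine (integral_prod_symm _
    ((hmp.integrable_comp_emb (MeasurableEquiv.measurableEmbedding _)).mpr hg)).trans ?_
  simp [MeasurableEquiv.piFinSuccAbove_symm_apply, Fin.consEquiv]

theorem integral_Icc_rpow_neg {a r : ℝ} (ha : 0 < a) (ha1 : a ≤ 1) (hr : r ≠ 1) :
    ∫ x in Set.Icc a 1, x ^ (-r) = (1 - a ^ (1 - r)) / (1 - r) := by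
  rw [integral_Icc_eq_integral_Ioc, ← intervalIntegral.integral_of_le ha1,
    integral_rpow (Or.inr ⟨fun h => hr (neg_injective h), by simp [ha1, ha.not_ge]⟩),
    neg_add_eq_sub, Real.one_rpow]

theorem prod_rpow_neg_add {ι : Type*} [Fintype ι] {y : ι → ℝ} (hy : ∀ j, 0 < y j)
    (a : ι → ℝ) (c : ℝ) :
    ∏ j, y j ^ (-(a j + c)) = (∏ j, y j ^ (-a j)) / (∏ j, y j) ^ c := by
  rw [← Real.finsetProd_rpow _ _ fun j _ => (hy j).le, ← prod_div_distrib]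
  refine prod_congr rfl fun j _ => ?_
  rw [neg_add, Real.rpow_add (hy j), Real.rpow_neg (hy j).le, Real.rpow_neg (hy j).le,
    div_eq_mul_inv]

/-- The region `K_ε` of the unit cube. -/
def hyperbolicRegion (n : ℕ) (ε : ℝ) : Set (Fin n → ℝ) :=
  Set.Icc 0 1 ∩ {t | ε ≤ ∏ j, t j}

namespace hyperbolicRegion

variable {n : ℕ} {ε : ℝ}

theorem le_apply {t : Fin n → ℝ} (ht : t ∈ hyperbolicRegion n ε) (j : Fin n) : ε ≤ t j := by
  obtain ⟨⟨h0, h1⟩, hε⟩ := ht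
  calc ε ≤ ∏ k, t k := hε
    _ = t j * ∏ k ∈ univ.erase j, t k := (mul_prod_erase _ _ (mem_univ j)).symm
    _ ≤ t j * 1 := by
      gcongr
      · exact h0 j
      · exact prod_le_one (fun k _ => h0 k) (fun k _ => h1 k)
    _ = t j := mul_one _

theorem isCompact : IsCompact (hyperbolicRegion n ε) :=
  isCompact_Icc.of_isClosed_subset
    (isClosed_Icc.inter (isClosed_le continuous_const (by fun_prop))) Set.inter_subset_left

theorem measurableSet : MeasurableSet (hyperbolicRegion n ε) :=
  isCompact.isClosed.measurableSet

theorem integrableOn_prod_rpow (A : Fin n → ℝ) (hε : 0 < ε) :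
    IntegrableOn (fun t : Fin n → ℝ => ∏ j, t j ^ (-A j)) (hyperbolicRegion n ε) := by
  refine ContinuousOn.integrableOn_compact isCompact fun t ht => ?_
  refine ContinuousAt.continuousWithinAt (tendsto_finsetProd _ fun j _ => ?_)
  exact (Real.continuousAt_rpow_const _ _ (Or.inl (hε.trans_le (le_apply ht j)).ne')).comp
    (f := fun p : Fin n → ℝ => p j) (continuous_apply j).continuousAt

theorem cons_mem_iff (hε : 0 < ε) (x : ℝ) (y : Fin n → ℝ) :
    (Fin.cons x y : Fin (n + 1) → ℝ) ∈ hyperbolicRegion (n + 1) ε ↔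
      y ∈ hyperbolicRegion n ε ∧ x ∈ Set.Icc (ε / ∏ j, y j) 1 := by
  simp only [hyperbolicRegion, Set.mem_inter_iff, Set.mem_Icc, Set.mem_ofPred_eq,
    Fin.prod_univ_succ, Fin.cons_zero, Fin.cons_succ, Fin.le_cons, Fin.cons_le]
  constructor
  · rintro ⟨⟨⟨hx0, hy0⟩, hx1, hy1⟩, hε_le⟩
    have hP : ε ≤ ∏ j, y j :=
      hε_le.trans (mul_le_of_le_one_left (prod_nonneg fun j _ => hy0 j) hx1)
    exact ⟨⟨⟨hy0, hy1⟩, hP⟩, (div_le_iff₀ (hε.trans_le hP)).mpr hε_le, hx1⟩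
  · rintro ⟨⟨⟨hy0, hy1⟩, hP⟩, hx, hx1⟩
    have hP0 : 0 < ∏ j, y j := hε.trans_le hP
    exact ⟨⟨⟨(div_pos hε hP0).le.trans hx, hy0⟩, hx1, hy1⟩, (div_le_iff₀ hP0).mp hx⟩

theorem setIntegral_succ (A : Fin (n + 1) → ℝ) (hA0 : A 0 ≠ 1) (hε : 0 < ε) :
    ∫ t in hyperbolicRegion (n + 1) ε, ∏ j, t j ^ (-A j) =
      (1 - A 0)⁻¹ * ((∫ y in hyperbolicRegion n ε, ∏ j, y j ^ (-A j.succ)) -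
        ε ^ (1 - A 0) * ∫ y in hyperbolicRegion n ε, ∏ j, y j ^ (-(A j.succ + (1 - A 0)))) := by
  set c := 1 - A 0
  have hc0 : c ≠ 0 := sub_ne_zero.mpr hA0.symm
  have hslice : ∀ y, ∫ x, (hyperbolicRegion (n + 1) ε).indicator
      (fun t => ∏ j, t j ^ (-A j)) (Fin.cons x y) = (hyperbolicRegion n ε).indicator
        (fun y => c⁻¹ * (∏ j, y j ^ (-A j.succ) - ε ^ c * ∏ j, y j ^ (-(A j.succ + c)))) y := by
    intro y
    by_cases hy : y ∈ hyperbolicRegion n ε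
    · have hP : 0 < ∏ j, y j := hε.trans_le hy.2
      have hy0 : ∀ j, 0 < y j := fun j => hε.trans_le (le_apply hy j)
      calc _ = ∫ x in Set.Icc (ε / ∏ j, y j) 1, (∏ j, y j ^ (-A j.succ)) * x ^ (-A 0) := by
            rw [← integral_indicator measurableSet_Icc]
            congr 1 with x
            by_cases hx : x ∈ Set.Icc (ε / ∏ j, y j) 1
            · rw [Set.indicator_of_mem ((cons_mem_iff hε x y).2 ⟨hy, hx⟩),
                Set.indicator_of_mem hx, Fin.prod_univ_succ, Fin.cons_zero, mul_comm]
              simp only [Fin.cons_succ]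
            · rw [Set.indicator_of_notMem fun h => hx ((cons_mem_iff hε x y).1 h).2,
                Set.indicator_of_notMem hx]
        _ = (∏ j, y j ^ (-A j.succ)) * ((1 - (ε / ∏ j, y j) ^ c) / c) := by
            rw [integral_const_mul, integral_Icc_rpow_neg (div_pos hε hP)
              ((div_le_one hP).2 hy.2) hA0]
        _ = _ := by
            rw [Set.indicator_of_mem hy, prod_rpow_neg_add hy0, Real.div_rpow hε.le hP.le]
            field_simp
    · rw [Set.indicator_of_notMem hy]
      simp [Set.indicator_of_notMem fun h => hy ((cons_mem_iff hε _ y).1 h).1]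
  rw [← integral_indicator measurableSet, integral_eq_integral_integral_cons
      ((integrableOn_prod_rpow A hε).integrable_indicator measurableSet)]
  simp_rw [hslice]
  rw [integral_indicator measurableSet, integral_const_mul,
    integral_sub (integrableOn_prod_rpow _ hε) ((integrableOn_prod_rpow _ hε).const_mul _),
    integral_const_mul]

end hyperbolicRegion

theorem deriv_prod_sub_apply {𝕜 ι : Type*} [NontriviallyNormedField 𝕜] [Fintype ι]
    [DecidableEq ι] (v : ι → 𝕜) (i : ι) :
    deriv (fun a : 𝕜 => ∏ k, (a - v k)) (v i) = ∏ k ∈ univ.erase i, (v i - v k) := by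
  simp_rw [← Lagrange.eval_nodal (s := univ)]
  rw [Polynomial.deriv, Lagrange.eval_nodal_derivative_eval_node_eq (mem_univ i),
    Lagrange.eval_nodal]

theorem setIntegral_hyperbolicRegion_eq_divDiff {n : ℕ} (A : Fin n → ℝ) (hA1 : ∀ j, A j ≠ 1)
    (hA : Function.Injective A) {ε : ℝ} (hε0 : 0 < ε) (hε1 : ε ≤ 1) :
    ∫ t in hyperbolicRegion n ε, ∏ j, t j ^ (-A j) =
      divDiff (fun a => ε ^ (1 - a)) (insert 1 (univ.image A)) := by
  induction n with
  | zero =>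
    have hK : hyperbolicRegion 0 ε = Set.univ := by
      simp [hyperbolicRegion, hε1, Set.eq_univ_iff_forall]
    simp [hK, divDiff_singleton, measureReal_def, volume_pi]
  | succ n ih =>
    set f : ℝ → ℝ := fun a => ε ^ (1 - a)
    set c := 1 - A 0
    set S := univ.image fun j : Fin n => A j.succ
    have hAS : A 0 ∉ S := by simpa [S] using fun (j : Fin n) h => Fin.succ_ne_zero j (hA h)
    have h1S : (1 : ℝ) ∉ S := by simpa [S] using fun j : Fin n => hA1 j.succ
    have hshift : ε ^ c * divDiff f (insert 1 (univ.image fun j : Fin n => A j.succ + c)) =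
        divDiff f (insert (A 0) S) := by
      have hmap : insert 1 (univ.image fun j : Fin n => A j.succ + c) =
          (insert (A 0) S).map (Equiv.addRight c).toEmbedding := by
        simp [S, c, map_eq_image, image_image, Function.comp_def]
      rw [hmap, divDiff_map_addRight, ← divDiff_const_mul]
      congr 1 with a
      simp only [f]
      rw [← Real.rpow_add hε0]
      ring_nf
    calc ∫ t in hyperbolicRegion (n + 1) ε, ∏ j, t j ^ (-A j)
        = c⁻¹ * (divDiff f (insert 1 S) - ε ^ c * divDiff f
            (insert 1 (univ.image fun j : Fin n => A j.succ + c))) := by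
          rw [hyperbolicRegion.setIntegral_succ A (hA1 0) hε0, ih _ (fun j => hA1 j.succ)
            (hA.comp (Fin.succ_injective n)), ih]
          · intro j h
            exact Fin.succ_ne_zero j (hA (by linarith))
          · exact fun i j h => Fin.succ_injective n (hA (add_right_cancel h))
      _ = c⁻¹ * (divDiff f ((insert 1 (insert (A 0) S)).erase (A 0)) -
            divDiff f ((insert 1 (insert (A 0) S)).erase 1)) := by
          rw [hshift, erase_insert_of_ne (hA1 0).symm, erase_insert hAS,
            erase_insert (by simpa [h1S] using (hA1 0).symm)]
      _ = divDiff f (insert 1 (univ.image A)) := by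
          rw [divDiff_erase_sub_divDiff_erase f (mem_insert_self _ _)
            (mem_insert_of_mem (mem_insert_self _ _)), inv_mul_cancel_left₀
            (sub_ne_zero.mpr (hA1 0).symm)]
          congr 2
          ext a
          simp [S, Fin.exists_fin_succ, eq_comm]

theorem stmt3_general (s : ℕ) (A : Fin s → ℝ) (hA1 : ∀ j, A j < 1)
    (hA : Function.Injective A) (ε : ℝ) (hε : ε ∈ Set.Ioc (0 : ℝ) 1) :
    ∫ t in Set.Icc (0 : Fin s → ℝ) 1 ∩ {t | ε ≤ ∏ j, t j}, ∏ j, t j ^ (-(A j))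
      = 1 / ((fun a : ℝ => ∏ j, (a - A j)) 1)
        + ∑ j, ε ^ (1 - A j) / ((A j - 1) * deriv (fun a : ℝ => ∏ k, (a - A k)) (A j)) := by
  have hA1' : ∀ j, A j ≠ 1 := fun j => (hA1 j).ne
  rw [← hyperbolicRegion, setIntegral_hyperbolicRegion_eq_divDiff A hA1' hA hε.1 hε.2,
    divDiff_insert_image _ hA hA1']
  simp only [sub_self, Real.rpow_zero, deriv_prod_sub_apply]

/-- Sobol' (1973): for pairwise distinct `A_j < 1`, `φ(a) = ∏_j (a - A_j)` and the
hyperbolic set `K_ε = {t ∈ [0,1]^s : ∏ t_j ≥ ε}`,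
`∫_{K_ε} ∏ t_j^{-A_j} dt = 1/φ(1) + ∑_j ε^{1-A_j} / ((A_j-1) φ'(A_j))`. -/
theorem stmt3 (s : ℕ) (hs : 1 ≤ s) (A : Fin s → ℝ) (hA1 : ∀ j, A j < 1)
    (hA : Function.Injective A) (ε : ℝ) (hε : ε ∈ Set.Ioc (0 : ℝ) 1) :
    ∫ t in Set.Icc (0 : Fin s → ℝ) 1 ∩ {t | ε ≤ ∏ j, t j}, ∏ j, t j ^ (-(A j))
      = 1 / ((fun a : ℝ => ∏ j, (a - A j)) 1)
        + ∑ j, ε ^ (1 - A j) / ((A j - 1) * deriv (fun a : ℝ => ∏ k, (a - A k)) (A j)) :=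
  stmt3_general s A hA1 hA ε hε
end

section
/- Suppose $|\Phi^{-1}(t)| \le \sqrt{-2\log(1-t)} + \bar\epsilon$ for $t\in[1/2,1)$ with some constant $\bar\epsilon \ge 0$, where $\Phi^{-1}$ is the inverse standard normal CDF. Then for $t \in [1/2,1)$, $\frac{d}{dt}\Phi^{-1}(t) \le \sqrt{2\pi}\, e^{\bar\epsilon^2/2}\, (1-t)^{-(1+\bar\epsilon)}$. -/
/-!
With `x = Φ⁻¹(t)`, the inverse function theorem gives `(Φ⁻¹)'(t) = 1 / φ(x) = √(2π) e^{x²/2}`, and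
`x ≥ 0` for `t ≥ 1/2`. The Gaussian tail bound `1 - Φ(x) ≤ e^{-x²/2}` (compare `φ(y)` with
`e^{-x²/2} φ(y - x)` for `y ≥ x ≥ 0`) turns this into `(Φ⁻¹)'(t) ≤ √(2π) / (1 - t)`, which is at
most `√(2π) e^{ε̄²/2} (1 - t)^{-(1+ε̄)}` because `0 < 1 - t ≤ 1`.
-/

open MeasureTheory ProbabilityTheory Real Set

noncomputable def stdNormalCDF (x : ℝ) : ℝ :=
  ∫ y in Set.Iic x, (Real.sqrt (2 * Real.pi))⁻¹ * Real.exp (-y ^ 2 / 2)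

lemma continuousAt_of_leftInverse_of_strictMono {α β : Type*} [LinearOrder α]
    [TopologicalSpace α] [OrderTopology α] [DenselyOrdered α] [LinearOrder β] [TopologicalSpace β]
    [OrderTopology β] {f : α → β} {g : β → α} (hf : StrictMono f) (hfc : Continuous f)
    (hgf : Function.LeftInverse g f) {s : Set β} (hs : IsOpen s) (hfg : ∀ y ∈ s, f (g y) = y)
    {a : β} (ha : a ∈ s) : ContinuousAt g a := by
  refine continuousAt_of_monotoneOn_of_image_mem_nhds (fun y hy z hz hyz => ?_)
    (hs.mem_nhds ha) ?_
  · rwa [← hf.le_iff_le, hfg y hy, hfg z hz]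
  · refine Filter.mem_of_superset ((hs.preimage hfc).mem_nhds (by rwa [mem_preimage, hfg a ha]))
      fun x hx => ⟨f x, hx, hgf x⟩

lemma continuous_gaussianPDFReal (μ : ℝ) (v : NNReal) : Continuous (gaussianPDFReal μ v) := by
  unfold gaussianPDFReal; fun_prop

lemma gaussianPDFReal_one (μ y : ℝ) :
    gaussianPDFReal μ 1 y = (√(2 * π))⁻¹ * exp (-(y - μ) ^ 2 / 2) := by
  simp [gaussianPDFReal]

lemma stdNormalCDF_eq_setIntegral (x : ℝ) :
    stdNormalCDF x = ∫ y in Iic x, gaussianPDFReal 0 1 y := by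
  simp only [stdNormalCDF, gaussianPDFReal_one, sub_zero]

lemma hasDerivAt_stdNormalCDF (x : ℝ) : HasDerivAt stdNormalCDF (gaussianPDFReal 0 1 x) x := by
  have hFTC :
      stdNormalCDF = fun u => stdNormalCDF 0 + ∫ y in (0 : ℝ)..u, gaussianPDFReal 0 1 y := by
    funext u
    rw [← intervalIntegral.integral_Iic_sub_Iic (integrable_gaussianPDFReal 0 1).integrableOn
      (integrable_gaussianPDFReal 0 1).integrableOn, stdNormalCDF_eq_setIntegral,
      stdNormalCDF_eq_setIntegral]
    ring
  rw [hFTC]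
  exact ((continuous_gaussianPDFReal 0 1).integral_hasStrictDerivAt 0 x).hasDerivAt.const_add _

lemma stdNormalCDF_strictMono : StrictMono stdNormalCDF :=
  strictMono_of_deriv_pos fun x => (hasDerivAt_stdNormalCDF x).deriv ▸
    gaussianPDFReal_pos 0 1 x one_ne_zero

lemma one_sub_stdNormalCDF (x : ℝ) : 1 - stdNormalCDF x = ∫ y in Ioi x, gaussianPDFReal 0 1 y := by
  rw [← integral_gaussianPDFReal_eq_one 0 one_ne_zero, ← compl_Iic,
    ← integral_add_compl measurableSet_Iic (integrable_gaussianPDFReal 0 1),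
    stdNormalCDF_eq_setIntegral]
  ring

lemma stdNormalCDF_zero : stdNormalCDF 0 = 1 / 2 := by
  have hsymm : ∫ y in Iic (0 : ℝ), gaussianPDFReal 0 1 y = ∫ y in Ioi 0, gaussianPDFReal 0 1 y := by
    rw [← neg_zero, ← integral_comp_neg_Ioi]
    simp [gaussianPDFReal_one]
  have := one_sub_stdNormalCDF 0
  rw [stdNormalCDF_eq_setIntegral] at this ⊢
  linarith

lemma one_sub_stdNormalCDF_le_exp {x : ℝ} (hx : 0 ≤ x) :
    1 - stdNormalCDF x ≤ exp (-x ^ 2 / 2) := by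
  have hshift : ∀ y ∈ Ioi x, gaussianPDFReal 0 1 y ≤ exp (-x ^ 2 / 2) * gaussianPDFReal x 1 y := by
    intro y hy
    rw [gaussianPDFReal_one, gaussianPDFReal_one, mul_left_comm, ← exp_add]
    gcongr
    nlinarith [mem_Ioi.1 hy]
  have hint := integrable_gaussianPDFReal x 1
  calc 1 - stdNormalCDF x = ∫ y in Ioi x, gaussianPDFReal 0 1 y := one_sub_stdNormalCDF x
    _ ≤ ∫ y in Ioi x, exp (-x ^ 2 / 2) * gaussianPDFReal x 1 y :=
        setIntegral_mono_on (integrable_gaussianPDFReal 0 1).integrableOn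
          (hint.const_mul _).integrableOn measurableSet_Ioi hshift
    _ ≤ ∫ y, exp (-x ^ 2 / 2) * gaussianPDFReal x 1 y :=
        setIntegral_le_integral (hint.const_mul _)
          (Filter.Eventually.of_forall fun y => by have := gaussianPDFReal_nonneg x 1 y; positivity)
    _ = exp (-x ^ 2 / 2) := by
        rw [integral_const_mul, integral_gaussianPDFReal_eq_one x one_ne_zero, mul_one]

lemma hasDerivAt_leftInverse_stdNormalCDF {g : ℝ → ℝ} (hleft : Function.LeftInverse g stdNormalCDF)
    (hright : ∀ t ∈ Ioo (0 : ℝ) 1, stdNormalCDF (g t) = t) {t : ℝ} (ht : t ∈ Ioo (0 : ℝ) 1) :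
    HasDerivAt g (√(2 * π) * exp (g t ^ 2 / 2)) t := by
  have hcont : ContinuousAt g t :=
    continuousAt_of_leftInverse_of_strictMono stdNormalCDF_strictMono
      (continuous_iff_continuousAt.2 fun x => (hasDerivAt_stdNormalCDF x).continuousAt) hleft
      isOpen_Ioo hright ht
  have hpdf_inv : (gaussianPDFReal 0 1 (g t))⁻¹ = √(2 * π) * exp (g t ^ 2 / 2) := by
    rw [gaussianPDFReal_one, mul_inv, inv_inv, ← exp_neg]
    ring_nf
  rw [← hpdf_inv]
  exact (hasDerivAt_stdNormalCDF (g t)).of_local_left_inverse hcont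
    (gaussianPDFReal_pos 0 1 _ one_ne_zero).ne'
    (Filter.eventually_of_mem (isOpen_Ioo.mem_nhds ht) hright)

theorem stmt11_general (Φinv : ℝ → ℝ)
    (hleft : ∀ x : ℝ, Φinv (stdNormalCDF x) = x)
    (hright : ∀ t ∈ Set.Ioo (0 : ℝ) 1, stdNormalCDF (Φinv t) = t)
    (ebar : ℝ) (hebar : 0 ≤ ebar) :
    ∀ t ∈ Set.Ico (1/2 : ℝ) 1,
      deriv Φinv t
        ≤ Real.sqrt (2 * Real.pi) * Real.exp (ebar ^ 2 / 2) * (1 - t) ^ (-(1 + ebar)) := by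
  intro t ⟨ht_half, ht_one⟩
  have ht : t ∈ Ioo (0 : ℝ) 1 := ⟨by linarith, ht_one⟩
  have hnonneg : 0 ≤ Φinv t := by
    rw [← stdNormalCDF_strictMono.le_iff_le, stdNormalCDF_zero, hright t ht]
    exact ht_half
  have htail : 1 - t ≤ exp (-Φinv t ^ 2 / 2) := by
    simpa only [hright t ht] using one_sub_stdNormalCDF_le_exp hnonneg
  have h1t : 0 < 1 - t := sub_pos.2 ht_one
  rw [(hasDerivAt_leftInverse_stdNormalCDF hleft hright ht).deriv, mul_assoc]
  gcongr
  calc exp (Φinv t ^ 2 / 2) ≤ (1 - t)⁻¹ := by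
        rwa [le_inv_comm₀ (exp_pos _) h1t, ← exp_neg, ← neg_div]
    _ = (1 - t) ^ (-1 : ℝ) := (rpow_neg_one _).symm
    _ ≤ (1 - t) ^ (-(1 + ebar)) := rpow_le_rpow_of_exponent_ge h1t (by linarith) (by linarith)
    _ ≤ exp (ebar ^ 2 / 2) * (1 - t) ^ (-(1 + ebar)) :=
        le_mul_of_one_le_left (by positivity) (one_le_exp (by positivity))

/-- If the inverse standard normal CDF satisfies
`|Φ⁻¹(t)| ≤ √(-2 log(1-t)) + ε̄` on `[1/2,1)` with `ε̄ ≥ 0`, then on `[1/2,1)`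
its derivative satisfies `(Φ⁻¹)'(t) ≤ √(2π) e^{ε̄²/2} (1-t)^{-(1+ε̄)}`. -/
theorem stmt11 (Φinv : ℝ → ℝ)
    (hleft : ∀ x : ℝ, Φinv (stdNormalCDF x) = x)
    (hright : ∀ t ∈ Set.Ioo (0 : ℝ) 1, stdNormalCDF (Φinv t) = t)
    (ebar : ℝ) (hebar : 0 ≤ ebar)
    (hbound : ∀ t ∈ Set.Ico (1/2 : ℝ) 1,
      |Φinv t| ≤ Real.sqrt (-2 * Real.log (1 - t)) + ebar) :
    ∀ t ∈ Set.Ico (1/2 : ℝ) 1,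
      deriv Φinv t
        ≤ Real.sqrt (2 * Real.pi) * Real.exp (ebar ^ 2 / 2) * (1 - t) ^ (-(1 + ebar)) :=
  stmt11_general Φinv hleft hright ebar hebar
end
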